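/- arXiv:1712.06907 — 6 statements merged into one kernel-verified Lean document; each statement's English description precedes it below -/
import Mathlib

section
/- The quasi-cyclic code Q_q(f,g,h) has dimension 2n - deg(f(x)) - deg(g(x)) as an F_q-linear subspace of F_q^{2n}. -/
open Polynomial Finset

noncomputable section

variable {F : Type*} [Field F] [DecidableEq F]

/-- The vector in `F^n` corresponding to the residue class of a polynomial
in `F[x]/(x^n-1)`: the coefficients of its canonical representative of degree `< n`. -/
def vecOf (n : ℕ) : F[X] →ₗ[F] (Fin n → F) where
  toFun a := fun i => (a %ₘ (X ^ n - 1)).coeff i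
  map_add' a b := by
    funext i
    simp [Polynomial.add_modByMonic]
  map_smul' c a := by
    funext i
    simp [Polynomial.smul_modByMonic]

/-- The quasi-cyclic code `Q_q(f,g,h)`: the `F`-subspace of `F^n × F^n ≃ F^{2n}`
corresponding to the `R`-submodule of `R²` generated by `([f],[h f])` and `(0,[g])`. -/
def QCcode (n : ℕ) (f g h : F[X]) : Submodule F ((Fin n → F) × (Fin n → F)) where
  carrier := {v | ∃ a b : F[X], v = (vecOf n (a * f), vecOf n (a * h * f + b * g))}
  zero_mem' := ⟨0, 0, by simp; rfl⟩
  add_mem' := by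
    rintro v w ⟨a1, b1, rfl⟩ ⟨a2, b2, rfl⟩
    refine ⟨a1 + a2, b1 + b2, ?_⟩
    have h1 : (a1 + a2) * f = a1 * f + a2 * f := by ring
    have h2 : (a1 + a2) * h * f + (b1 + b2) * g
        = (a1 * h * f + b1 * g) + (a2 * h * f + b2 * g) := by ring
    rw [h1, h2, map_add (vecOf n) (a1 * f) (a2 * f),
      map_add (vecOf n) (a1 * h * f + b1 * g) (a2 * h * f + b2 * g)]
    rfl
  smul_mem' := by
    rintro c v ⟨a, b, rfl⟩
    refine ⟨c • a, c • b, ?_⟩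
    have h1 : (c • a) * f = c • (a * f) := smul_mul_assoc c a f
    have h2 : (c • a) * h * f + (c • b) * g = c • (a * h * f + b * g) := by
      rw [smul_add, smul_mul_assoc, smul_mul_assoc, smul_mul_assoc]
    rw [h1, h2, map_smul, map_smul]
    rfl

/-- Hamming weight of a vector. -/
def hWt {n : ℕ} (x : Fin n → F) : ℕ := Nat.card {i : Fin n // x i ≠ 0}

/-- Hamming weight of a vector of `F^{2n}` presented as a pair. -/
def hWt2 {n : ℕ} (v : (Fin n → F) × (Fin n → F)) : ℕ := hWt v.1 + hWt v.2

/-- Symplectic weight. -/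
def sWt {n : ℕ} (v : (Fin n → F) × (Fin n → F)) : ℕ :=
  Nat.card {i : Fin n // (v.1 i, v.2 i) ≠ (0, 0)}

/-- Euclidean inner product on `F^n`. -/
def eInn {n : ℕ} (x y : Fin n → F) : F := ∑ i, x i * y i

/-- Euclidean inner product on `F^{2n}`. -/
def eInn2 {n : ℕ} (x y : (Fin n → F) × (Fin n → F)) : F := eInn x.1 y.1 + eInn x.2 y.2

/-- Symplectic inner product on `F^{2n}`. -/
def sInn {n : ℕ} (x y : (Fin n → F) × (Fin n → F)) : F :=
  ∑ i, (x.1 i * y.2 i - x.2 i * y.1 i)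

/-- Hermitian inner product on `F^{2n}` (with respect to `x ↦ x^q`). -/
def hInn2 (q : ℕ) {n : ℕ} (x y : (Fin n → F) × (Fin n → F)) : F :=
  (∑ i, x.1 i ^ q * y.1 i) + ∑ i, x.2 i ^ q * y.2 i

def sDualSet {n : ℕ} (C : Set ((Fin n → F) × (Fin n → F))) : Set ((Fin n → F) × (Fin n → F)) :=
  {x | ∀ y ∈ C, sInn x y = 0}

def eDualSet {n : ℕ} (C : Set ((Fin n → F) × (Fin n → F))) : Set ((Fin n → F) × (Fin n → F)) :=
  {x | ∀ y ∈ C, eInn2 x y = 0}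

def hDualSet (q : ℕ) {n : ℕ} (C : Set ((Fin n → F) × (Fin n → F))) :
    Set ((Fin n → F) × (Fin n → F)) :=
  {x | ∀ y ∈ C, hInn2 q x y = 0}

/-- `x^n f(1/x)` for `f` of degree `< n`. -/
def barPoly (n : ℕ) (f : F[X]) : F[X] := ∑ i ∈ f.support, C (f.coeff i) * X ^ (n - i)

/-- `f^⊥ = x^{deg f'} f'(1/x)` where `f f' = x^n - 1`. -/
def perpPoly (n : ℕ) (f : F[X]) : F[X] := ((X ^ n - 1) /ₘ f).reverse

/-- coefficientwise `q`-th power. -/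
def polyQ (q : ℕ) (f : F[X]) : F[X] := ∑ i ∈ f.support, C (f.coeff i ^ q) * X ^ i

/-- minimum Hamming weight of the cyclic code generated by `[u]`. -/
def cycDist (n : ℕ) (u : F[X]) : ℕ :=
  sInf {w | ∃ a : F[X], vecOf n (a * u) ≠ 0 ∧ w = hWt (vecOf n (a * u))}

/-- The general QC set generated by `([u₁],[v₁])` and `([u₂],[v₂])`. -/
def QCspan (n : ℕ) (u₁ v₁ u₂ v₂ : F[X]) : Set ((Fin n → F) × (Fin n → F)) :=
  {w | ∃ a b : F[X], w = (vecOf n (a * u₁ + b * u₂), vecOf n (a * v₁ + b * v₂))}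

/-- The lower bound `d_q(f,g,h)` for the symplectic weight (a rational number). -/
def dSymp (q n : ℕ) (f g h : F[X]) : ℚ :=
  min (min (min (cycDist n g : ℚ)
    (cycDist n ((X ^ n - 1) / GCDMonoid.gcd (X ^ n - 1) h) : ℚ))
    (cycDist n (GCDMonoid.lcm f (g / GCDMonoid.gcd g h)) : ℚ))
    ((cycDist n f + cycDist n (GCDMonoid.gcd (h * f) g) + ((q : ℚ) - 1) * cycDist n (GCDMonoid.gcd f g)) / q)

/-- The lower bound `d_q^e(f,g,h)` for the minimum distance. -/
def dEucl (n : ℕ) (f g h : F[X]) : ℕ :=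
  min (min (min (cycDist n g)
    (cycDist n ((X ^ n - 1) / GCDMonoid.gcd (X ^ n - 1) h)))
    (cycDist n (GCDMonoid.lcm f (g / GCDMonoid.gcd g h))))
    (cycDist n f + cycDist n (GCDMonoid.gcd (h * f) g))

/-
Proof idea: put `f f' = g g' = x^n - 1`. Every codeword is the image of a pair `(a, b)` with
`deg a < deg f'` and `deg b < deg g'`, since reducing `a` mod `f'` and `b` mod `g'` changes `a f`,
`a h f` and `b g` by multiples of `x^n - 1`. On such pairs the parametrization is injective:
`x^n - 1 ∣ a f` forces `f' ∣ a`, hence `a = 0`, and then likewise `b = 0`. So the code has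
dimension `deg f' + deg g' = (n - deg f) + (n - deg g)`.
-/

section QuasiCyclic

variable {K : Type*} [Field K]

section VecOf

variable {n : ℕ}

theorem X_pow_sub_one_ne_zero (hn : 0 < n) : (X ^ n - 1 : K[X]) ≠ 0 :=
  X_pow_sub_C_ne_zero hn 1

theorem modByMonic_X_pow_sub_one_mem_degreeLT (hn : 0 < n) (p : K[X]) :
    p %ₘ (X ^ n - 1) ∈ degreeLT K n := by
  rw [mem_degreeLT, ← degree_X_pow_sub_C hn (1 : K), ← C_1]
  exact degree_modByMonic_lt p (monic_X_pow_sub_C 1 hn.ne')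

theorem vecOf_eq_degreeLTEquiv (hn : 0 < n) (p : K[X]) :
    vecOf n p = degreeLTEquiv K n ⟨_, modByMonic_X_pow_sub_one_mem_degreeLT hn p⟩ :=
  rfl

theorem vecOf_eq_zero_iff (hn : 0 < n) (p : K[X]) : vecOf n p = 0 ↔ X ^ n - 1 ∣ p := by
  rw [vecOf_eq_degreeLTEquiv hn, LinearEquiv.map_eq_zero_iff, Submodule.mk_eq_zero,
    modByMonic_eq_zero_iff_dvd]
  simpa using monic_X_pow_sub_C (1 : K) hn.ne'

theorem vecOf_eq_vecOf_iff (hn : 0 < n) (p q : K[X]) :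
    vecOf n p = vecOf n q ↔ X ^ n - 1 ∣ p - q := by
  rw [← sub_eq_zero, ← map_sub, vecOf_eq_zero_iff hn]

end VecOf

theorem natDegree_add_natDegree_of_mul_eq {n : ℕ} (hn : 0 < n) {f f' : K[X]}
    (hff' : f * f' = X ^ n - 1) : f.natDegree + f'.natDegree = n := by
  have hne : f * f' ≠ 0 := hff' ▸ X_pow_sub_one_ne_zero hn
  rw [← natDegree_mul (left_ne_zero_of_mul hne) (right_ne_zero_of_mul hne), hff', ← C_1,
    natDegree_X_pow_sub_C]

theorem mul_dvd_mul_sub_mod_mul (a f f' : K[X]) : f * f' ∣ a * f - a % f' * f :=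
  ⟨a / f', by linear_combination (-f) * EuclideanDomain.mod_add_div a f'⟩

theorem mod_mem_degreeLT_natDegree (a : K[X]) {f : K[X]} (hf : f ≠ 0) :
    a % f ∈ degreeLT K f.natDegree := by
  rw [mem_degreeLT, ← degree_eq_natDegree hf]
  exact degree_mod_lt a hf

theorem eq_zero_of_mem_degreeLT_of_mul_dvd {a f f' : K[X]} (hf : f ≠ 0)
    (ha : a ∈ degreeLT K f'.natDegree) (hdvd : f * f' ∣ a * f) : a = 0 := by
  rw [mul_comm a, mul_dvd_mul_iff_left hf] at hdvd
  by_contra ha0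
  rw [mem_degreeLT, ← degree_eq_natDegree (ne_zero_of_dvd_ne_zero ha0 hdvd)] at ha
  exact ha0 (eq_zero_of_dvd_of_degree_lt hdvd ha)

def qcParam (n : ℕ) (f g h : K[X]) : K[X] × K[X] →ₗ[K] (Fin n → K) × (Fin n → K) :=
  ((vecOf n ∘ₗ LinearMap.mulRight K f) ∘ₗ LinearMap.fst K K[X] K[X]).prod
    (vecOf n ∘ₗ (LinearMap.mulRight K (h * f)).coprod (LinearMap.mulRight K g))

theorem qcParam_apply (n : ℕ) (f g h a b : K[X]) :
    qcParam n f g h (a, b) = (vecOf n (a * f), vecOf n (a * h * f + b * g)) := by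
  simp [qcParam, mul_assoc]

theorem range_qcParam (n : ℕ) (f g h : K[X]) :
    LinearMap.range (qcParam n f g h) = QCcode n f g h := by
  ext v
  simp only [LinearMap.mem_range, Prod.exists, qcParam_apply]
  exact ⟨fun ⟨a, b, hv⟩ => ⟨a, b, hv.symm⟩, fun ⟨a, b, hv⟩ => ⟨a, b, hv.symm⟩⟩

section Dimension

variable {n : ℕ} {f f' g g' : K[X]}

theorem injective_qcParam_comp_subtype (hn : 0 < n) (hff' : f * f' = X ^ n - 1)
    (hgg' : g * g' = X ^ n - 1) (h : K[X]) :
    Function.Injective (qcParam n f g h ∘ₗ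
      (degreeLT K f'.natDegree).subtype.prodMap (degreeLT K g'.natDegree).subtype) := by
  have hf : f ≠ 0 := left_ne_zero_of_mul (hff' ▸ X_pow_sub_one_ne_zero hn)
  have hg : g ≠ 0 := left_ne_zero_of_mul (hgg' ▸ X_pow_sub_one_ne_zero hn)
  rw [← LinearMap.ker_eq_bot, Submodule.eq_bot_iff]
  rintro ⟨⟨a, ha⟩, ⟨b, hb⟩⟩ hab
  simp only [LinearMap.mem_ker, LinearMap.comp_apply, LinearMap.prodMap_apply,
    Submodule.subtype_apply, qcParam_apply, Prod.mk_eq_zero, vecOf_eq_zero_iff hn] at hab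
  obtain ⟨hdvd_a, hdvd_b⟩ := hab
  obtain rfl : a = 0 := eq_zero_of_mem_degreeLT_of_mul_dvd hf ha (hff' ▸ hdvd_a)
  obtain rfl : b = 0 := eq_zero_of_mem_degreeLT_of_mul_dvd hg hb (by simpa [hgg'] using hdvd_b)
  rfl

theorem range_qcParam_comp_subtype (hn : 0 < n) (hff' : f * f' = X ^ n - 1)
    (hgg' : g * g' = X ^ n - 1) (h : K[X]) :
    LinearMap.range (qcParam n f g h ∘ₗ
      (degreeLT K f'.natDegree).subtype.prodMap (degreeLT K g'.natDegree).subtype) =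
      LinearMap.range (qcParam n f g h) := by
  have hf' : f' ≠ 0 := right_ne_zero_of_mul (hff' ▸ X_pow_sub_one_ne_zero hn)
  have hg' : g' ≠ 0 := right_ne_zero_of_mul (hgg' ▸ X_pow_sub_one_ne_zero hn)
  refine le_antisymm (LinearMap.range_comp_le_range _ _) ?_
  rintro _ ⟨⟨a, b⟩, rfl⟩
  refine ⟨(⟨a % f', mod_mem_degreeLT_natDegree a hf'⟩,
    ⟨b % g', mod_mem_degreeLT_natDegree b hg'⟩), ?_⟩
  have hdvd_a := hff' ▸ mul_dvd_mul_sub_mod_mul a f f'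
  have hdvd_b := hgg' ▸ mul_dvd_mul_sub_mod_mul b g g'
  simp only [LinearMap.comp_apply, LinearMap.prodMap_apply, Submodule.subtype_apply,
    qcParam_apply, Prod.mk.injEq, vecOf_eq_vecOf_iff hn]
  refine ⟨dvd_sub_comm.1 hdvd_a, dvd_sub_comm.1 ?_⟩
  have hsplit : a * h * f + b * g - (a % f' * h * f + b % g' * g) =
      h * (a * f - a % f' * f) + (b * g - b % g' * g) := by ring
  rw [hsplit]
  exact dvd_add (dvd_mul_of_dvd_right hdvd_a h) hdvd_b

theorem finrank_QCcode (hn : 0 < n) (hff' : f * f' = X ^ n - 1) (hgg' : g * g' = X ^ n - 1)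
    (h : K[X]) : Module.finrank K (QCcode n f g h) = f'.natDegree + g'.natDegree := by
  rw [← range_qcParam, ← range_qcParam_comp_subtype hn hff' hgg',
    LinearMap.finrank_range_of_inj (injective_qcParam_comp_subtype hn hff' hgg' h),
    Module.finrank_eq_card_basis (degreeLT.basisProd K _ _), Fintype.card_fin]

end Dimension

end QuasiCyclic

theorem stmt2_general (n : ℕ) (hn : 0 < n) (f g h : F[X])
    (hfdvd : f ∣ X ^ n - 1) (hgdvd : g ∣ X ^ n - 1) :
    Module.finrank F (QCcode n f g h) = 2 * n - f.natDegree - g.natDegree := by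
  obtain ⟨f', hff'⟩ := hfdvd
  obtain ⟨g', hgg'⟩ := hgdvd
  have hf := natDegree_add_natDegree_of_mul_eq hn hff'.symm
  have hg := natDegree_add_natDegree_of_mul_eq hn hgg'.symm
  rw [finrank_QCcode hn hff'.symm hgg'.symm h]
  omega

/-- the QC code `Q_q(f,g,h)` has dimension `2n - deg f - deg g`. -/
theorem stmt2 [Fintype F] (n : ℕ) (hn : 0 < n) (f g h : F[X])
    (hf : f.Monic) (hg : g.Monic) (hh : h.Monic)
    (hfd : f.degree < n) (hgd : g.degree < n) (hhd : h.degree < n)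
    (hfdvd : f ∣ X ^ n - 1) (hgdvd : g ∣ X ^ n - 1) :
    Module.finrank F (QCcode n f g h) = 2 * n - f.natDegree - g.natDegree :=
  stmt2_general n hn f g h hfdvd hgdvd

end
end

section
/- The symplectic dual Q_q(f,g,h)^{perp_s} of the quasi-cyclic code Q_q(f,g,h) equals the quasi-cyclic code of length 2n corresponding to the R-submodule of R^2 generated by ([g^perp(x)], [hbar(x) g^perp(x)]) and (0, [f^perp(x)]). -/
/-!
Identify `F^n` with `R = F[x]/(x^n - 1)` through the basis `1, x, …, x^(n-1)` and let `σ` be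
the involution `a(x) ↦ a(x⁻¹)` of `R`. The Euclidean product `∑ aᵢ bᵢ` is the constant term
`ε (a σ(b))`, so the symplectic product of `(y, z)` and `(y', z')` is `ε (y σ(z') - z σ(y'))`.
Since `ε (u σ(c)) = 0` for all `c` forces `u = 0`, a pair `(y, z)` is orthogonal to `Q(f,g,h)`
iff `y σ(g) = 0` and `(y σ(h) - z) σ(f) = 0`. The annihilator of `σ(g)` is the ideal generated
by `σ((x^n - 1)/g)`, an associate of `g^⊥`, and `hbar ≡ σ(h)`; solving the two conditions
gives exactly the generators of the claimed code.
-/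

open Polynomial Finset

noncomputable section

variable {F : Type*} [Field F] [DecidableEq F]

open AdjoinRoot

theorem AdjoinRoot.mul_mk_eq_zero_iff_mk_dvd {R : Type*} [CommRing R] [IsDomain R]
    {m g k : R[X]} (hm : m = g * k) (hg : g ≠ 0) (z : AdjoinRoot m) :
    z * mk m g = 0 ↔ mk m k ∣ z := by
  constructor
  · obtain ⟨u, rfl⟩ := mk_surjective z
    intro hz
    rw [← map_mul, mk_eq_zero, hm, mul_comm u, mul_dvd_mul_iff_left hg] at hz
    exact map_dvd _ hz
  · rintro ⟨w, rfl⟩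
    rw [mul_right_comm, ← map_mul, mul_comm k, ← hm, mk_self, zero_mul]

namespace QuasiCyclic

section CommRing

variable {R : Type*} [CommRing R] {n : ℕ}

local notation "𝓡" => AdjoinRoot ((X : R[X]) ^ n - 1)

local notation "ρ" => root ((X : R[X]) ^ n - 1)

lemma root_pow_self : ρ ^ n = 1 := by
  have := mk_self (f := (X : R[X]) ^ n - 1)
  rwa [map_sub, map_pow, mk_X, map_one, sub_eq_zero] at this

variable (R n) in
def inversion : 𝓡 →ₐ[R] 𝓡 :=
  liftAlgHom _ (Algebra.ofId R _) (ρ ^ (n - 1)) (by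
    rw [eval₂_sub, eval₂_X_pow, eval₂_one, ← pow_mul, mul_comm, pow_mul, root_pow_self,
      one_pow, sub_self])

local notation "σ" => inversion R n

lemma inversion_root : σ ρ = ρ ^ (n - 1) := liftAlgHom_root ..

lemma inversion_mk (p : R[X]) : σ (mk _ p) = aeval (σ ρ) p := by
  rw [aeval_algHom_apply, aeval_eq]

lemma natDegree_X_pow_sub_one [Nontrivial R] : ((X : R[X]) ^ n - 1).natDegree = n := by
  simpa using natDegree_X_pow_sub_C (n := n) (r := (1 : R))

variable [NeZero n]

lemma monic_X_pow_sub_one : ((X : R[X]) ^ n - 1).Monic := by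
  simpa using monic_X_pow_sub_C (1 : R) (NeZero.ne n)

lemma inversion_root_mul_root : σ ρ * ρ = 1 := by
  rw [inversion_root, pow_sub_one_mul (NeZero.ne n), root_pow_self]

lemma inversion_inversion (z : 𝓡) : σ (σ z) = z := by
  have hσσ : (σ).comp σ = AlgHom.id R 𝓡 := by
    refine algHom_ext (left_inv_eq_right_inv ?_ inversion_root_mul_root)
    rw [AlgHom.comp_apply, ← map_mul, inversion_root_mul_root, map_one]
  exact AlgHom.congr_fun hσσ z

lemma root_pow_mul_inversion_root_pow {i j : ℕ} (h : j ≤ i) :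
    ρ ^ i * σ (ρ ^ j) = ρ ^ (i - j) := by
  obtain ⟨k, rfl⟩ := Nat.exists_eq_add_of_le h
  rw [map_pow, Nat.add_sub_cancel_left, pow_add, mul_right_comm, ← mul_pow, mul_comm ρ,
    inversion_root_mul_root, one_pow, one_mul]

lemma inversion_root_pow {j : ℕ} (h : j ≤ n) : σ (ρ ^ j) = ρ ^ (n - j) := by
  rw [← root_pow_mul_inversion_root_pow h, root_pow_self, one_mul]

lemma mk_reverse_mul_inversion_root_pow (p : R[X]) :
    mk _ p.reverse * σ ρ ^ p.natDegree = σ (mk _ p) := by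
  let : Invertible (σ ρ) :=
    ⟨ρ, by rw [mul_comm, inversion_root_mul_root], inversion_root_mul_root⟩
  have := eval₂_reverse_mul_pow (algebraMap R 𝓡) (σ ρ) p
  rwa [← aeval_def, ← aeval_def, show ⅟(σ ρ) = ρ from rfl, aeval_eq, ← inversion_mk] at this

section Coordinates

variable [Nontrivial R]

variable (R n) in
def cycBasis : Module.Basis (Fin n) R 𝓡 :=
  (powerBasisAux' monic_X_pow_sub_one).reindex (finCongr natDegree_X_pow_sub_one)

lemma cycBasis_apply (i : Fin n) : cycBasis R n i = ρ ^ (i : ℕ) := by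
  rw [cycBasis, Module.Basis.reindex_apply]
  exact (powerBasis' monic_X_pow_sub_one).basis_eq_pow _

lemma cycBasis_repr_mk (p : R[X]) (i : Fin n) :
    (cycBasis R n).repr (mk _ p) i = (p %ₘ (X ^ n - 1)).coeff i := by
  rw [cycBasis, Module.Basis.repr_reindex_apply, powerBasisAux'_repr_apply_to_fun,
    modByMonicHom_mk]
  rfl

variable (R n) in
def constTerm : 𝓡 →ₗ[R] R := (cycBasis R n).coord 0

local notation "ε" => constTerm R n

lemma constTerm_root_pow {k : ℕ} (hk : k < n) : ε (ρ ^ k) = if k = 0 then 1 else 0 := by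
  rw [constTerm, Module.Basis.coord_apply, ← cycBasis_apply ⟨k, hk⟩, Module.Basis.repr_self,
    Finsupp.single_apply]
  simp [Fin.ext_iff]

lemma constTerm_root_pow_mul_inversion (i j : Fin n) :
    ε (ρ ^ (i : ℕ) * σ (ρ ^ (j : ℕ))) = if i = j then 1 else 0 := by
  rcases le_or_gt (j : ℕ) i with h | h
  · rw [root_pow_mul_inversion_root_pow h, constTerm_root_pow (by omega)]
    exact if_congr (by rw [Fin.ext_iff]; omega) rfl rfl
  · rw [inversion_root_pow (by omega), ← pow_add, constTerm_root_pow (by omega)]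
    exact if_congr (by rw [Fin.ext_iff]; omega) rfl rfl

lemma sum_repr_mul_repr (y z : 𝓡) :
    ∑ i, (cycBasis R n).repr y i * (cycBasis R n).repr z i = ε (y * σ z) := by
  conv_rhs => rw [← (cycBasis R n).sum_repr y, ← (cycBasis R n).sum_repr z]
  simp only [map_sum, map_smul, Finset.sum_mul_sum, smul_mul_smul_comm, cycBasis_apply,
    constTerm_root_pow_mul_inversion, smul_eq_mul, mul_ite, mul_one, mul_zero,
    Finset.sum_ite_eq, Finset.mem_univ, if_true]

lemma eq_zero_of_forall_constTerm_mul_inversion {y : 𝓡} (hy : ∀ z, ε (y * σ z) = 0) :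
    y = 0 := by
  refine (cycBasis R n).ext_elem fun i => ?_
  rw [map_zero, Finsupp.zero_apply, ← hy (cycBasis R n i), ← sum_repr_mul_repr]
  simp [Module.Basis.repr_self, Finsupp.single_apply]

lemma forall_constTerm_eq_zero_iff (f g h y z : 𝓡) :
    (∀ a b : 𝓡, ε (y * σ (a * h * f + b * g) - z * σ (a * f)) = 0) ↔
      y * σ g = 0 ∧ (y * σ h - z) * σ f = 0 := by
  constructor
  · intro H
    constructor
    · refine eq_zero_of_forall_constTerm_mul_inversion fun b => ?_
      convert H 0 b using 2
      simp only [map_mul, zero_mul, zero_add, map_zero, mul_zero, sub_zero]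
      ring
    · refine eq_zero_of_forall_constTerm_mul_inversion fun a => ?_
      convert H a 0 using 2
      simp only [map_mul, zero_mul, add_zero]
      ring
  · rintro ⟨hg, hf⟩ a b
    have : y * σ (a * h * f + b * g) - z * σ (a * f) =
        σ a * ((y * σ h - z) * σ f) + σ b * (y * σ g) := by
      simp only [map_mul, map_add]
      ring
    rw [this, hg, hf, mul_zero, mul_zero, add_zero, map_zero]

end Coordinates

end CommRing

section Field

variable {K : Type*} [Field K] {n : ℕ} [NeZero n]

local notation "𝓚" => AdjoinRoot ((X : K[X]) ^ n - 1)

local notation "σ" => inversion K n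

local notation "ε" => constTerm K n

local notation "e" => Module.Basis.equivFun (cycBasis K n)

lemma mk_barPoly {h : K[X]} (hh : h.natDegree ≤ n) : mk _ (barPoly n h) = σ (mk _ h) := by
  conv_rhs => rw [h.as_sum_support_C_mul_X_pow]
  simp only [barPoly, map_sum, map_mul, map_pow, mk_C, mk_X]
  refine Finset.sum_congr rfl fun i hi => ?_
  rw [← map_pow, inversion_root_pow ((le_natDegree_of_mem_supp i hi).trans hh),
    ← AdjoinRoot.algebraMap_eq, AlgHom.commutes]

lemma mul_inversion_mk_eq_zero_iff {g : K[X]} (hg : g.Monic) (hgd : g ∣ X ^ n - 1) (z : 𝓚) :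
    z * σ (mk _ g) = 0 ↔ mk _ (perpPoly n g) ∣ z := by
  obtain ⟨k, hk⟩ := hgd
  have hquot : (X ^ n - 1) /ₘ g = k := by rw [hk, mul_divByMonic_cancel_left _ hg]
  have hunit : IsUnit (σ (root _) ^ k.natDegree) :=
    (IsUnit.of_mul_eq_one _ inversion_root_mul_root).pow _
  rw [perpPoly, hquot, ← hunit.mul_right_dvd, mk_reverse_mul_inversion_root_pow,
    ← map_eq_zero_iff σ (Function.LeftInverse.injective inversion_inversion), map_mul,
    inversion_inversion, mul_mk_eq_zero_iff_mk_dvd hk hg.ne_zero]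
  constructor <;> intro hdvd <;> simpa only [inversion_inversion] using map_dvd σ hdvd

lemma vecOf_eq_equivFun_mk (p : K[X]) : vecOf n p = e (mk _ p) := by
  ext i
  rw [Module.Basis.equivFun_apply, cycBasis_repr_mk]
  rfl

lemma sInn_equivFun (y₁ y₂ z₁ z₂ : 𝓚) :
    sInn (e y₁, e y₂) (e z₁, e z₂) = ε (y₁ * σ z₂ - y₂ * σ z₁) := by
  simp only [sInn, Module.Basis.equivFun_apply, Finset.sum_sub_distrib, sum_repr_mul_repr,
    map_sub]

lemma mem_QCcode_iff {f g h : K[X]} {y z : 𝓚} :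
    (e y, e z) ∈ QCcode n f g h ↔
      ∃ a b : 𝓚, y = a * mk _ f ∧ z = a * mk _ h * mk _ f + b * mk _ g := by
  change (∃ a b : K[X], _) ↔ _
  simp only [vecOf_eq_equivFun_mk, Prod.mk.injEq, (Module.Basis.equivFun _).injective.eq_iff]
  constructor
  · rintro ⟨a, b, hy, hz⟩
    exact ⟨mk _ a, mk _ b, by rw [hy, map_mul], by rw [hz, map_add, map_mul, map_mul, map_mul]⟩
  · rintro ⟨a, b, rfl, rfl⟩
    obtain ⟨a, rfl⟩ := mk_surjective a
    obtain ⟨b, rfl⟩ := mk_surjective b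
    exact ⟨a, b, by rw [map_mul], by rw [map_add, map_mul, map_mul, map_mul]⟩

lemma mem_sDualSet_QCcode_iff {f g h : K[X]} {y z : 𝓚} :
    (e y, e z) ∈ sDualSet (QCcode n f g h : Set ((Fin n → K) × (Fin n → K))) ↔
      ∀ a b : 𝓚, ε (y * σ (a * mk _ h * mk _ f + b * mk _ g) - z * σ (a * mk _ f)) = 0 := by
  change (∀ w ∈ {v | ∃ a b : K[X], _}, _) ↔ _
  constructor
  · intro H a b
    obtain ⟨a, rfl⟩ := mk_surjective a
    obtain ⟨b, rfl⟩ := mk_surjective b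
    have := H _ ⟨a, b, rfl⟩
    rwa [vecOf_eq_equivFun_mk, vecOf_eq_equivFun_mk, sInn_equivFun, map_add, map_mul, map_mul,
      map_mul, map_mul] at this
  · rintro H _ ⟨a, b, rfl⟩
    rw [vecOf_eq_equivFun_mk, vecOf_eq_equivFun_mk, sInn_equivFun, map_add, map_mul, map_mul,
      map_mul, map_mul]
    exact H _ _

end Field

end QuasiCyclic

open QuasiCyclic

theorem stmt3_general (n : ℕ) (hn : 0 < n) (f g h : F[X])
    (hf : f.Monic) (hg : g.Monic) (hhd : h.degree < n)
    (hfdvd : f ∣ X ^ n - 1) (hgdvd : g ∣ X ^ n - 1) :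
    sDualSet (QCcode n f g h : Set ((Fin n → F) × (Fin n → F))) =
      (QCcode n (perpPoly n g) (perpPoly n f) (barPoly n h) :
        Set ((Fin n → F) × (Fin n → F))) := by
  have : NeZero n := ⟨hn.ne'⟩
  ext ⟨v₁, v₂⟩
  obtain ⟨y, rfl⟩ := (cycBasis F n).equivFun.surjective v₁
  obtain ⟨z, rfl⟩ := (cycBasis F n).equivFun.surjective v₂
  rw [mem_sDualSet_QCcode_iff, forall_constTerm_eq_zero_iff, SetLike.mem_coe, mem_QCcode_iff,
    mk_barPoly (natDegree_le_of_degree_le hhd.le), mul_inversion_mk_eq_zero_iff hg hgdvd,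
    mul_inversion_mk_eq_zero_iff hf hfdvd]
  constructor
  · rintro ⟨⟨a, rfl⟩, b, hb⟩
    exact ⟨a, -b, mul_comm _ _, by linear_combination -hb⟩
  · rintro ⟨a, b, rfl, rfl⟩
    exact ⟨⟨a, mul_comm _ _⟩, -b, by ring⟩

/-- the symplectic dual of `Q_q(f,g,h)` is the QC code generated by
`([g^⊥], [hbar g^⊥])` and `(0, [f^⊥])`. -/
theorem stmt3 [Fintype F] (n : ℕ) (hn : 0 < n) (f g h : F[X])
    (hf : f.Monic) (hg : g.Monic) (hh : h.Monic)
    (hfd : f.degree < n) (hgd : g.degree < n) (hhd : h.degree < n)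
    (hfdvd : f ∣ X ^ n - 1) (hgdvd : g ∣ X ^ n - 1) :
    sDualSet (QCcode n f g h : Set ((Fin n → F) × (Fin n → F))) =
      (QCcode n (perpPoly n g) (perpPoly n f) (barPoly n h) :
        Set ((Fin n → F) × (Fin n → F))) :=
  stmt3_general n hn f g h hf hg hhd hfdvd hgdvd
end
end

section
/- Every element of the R-submodule of R^2 generated by ([g^perp(x)], [hbar(x) g^perp(x)]) and (0, [f^perp(x)]) has symplectic inner product zero with every element of the quasi-cyclic code Q_q(f,g,h); equivalently, the quasi-cyclic code generated by ([g^perp(x)], [hbar(x) g^perp(x)]) and (0, [f^perp(x)]) is contained in Q_q(f,g,h)^{perp_s}. -/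
/-!
In `R = F[x]/(x^n - 1)` let `σ` be the ring involution `x ↦ x⁻¹ = x^(n-1)`. The Euclidean
product of the coefficient vectors of `[u]` and `[v]` is the coefficient of `x^(n-1)` in
`u · x^(n-1) v(1/x)`, whose class in `R` is `x^(n-1) [u] σ[v]`; since a multiple of `x^n - 1` of
degree at most `2n - 2` has no `x^(n-1)` term, the symplectic product of `([u₁],[u₂])` and
`([v₁],[v₂])` vanishes as soon as `[u₁] σ[v₂] = [u₂] σ[v₁]`. For the two codes this identity
follows from `[h̄] = σ[h]` and `[g^⊥] σ[g] = x^(deg g') σ[g' g] = 0`, and likewise for `f`.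
-/

open Polynomial Finset

noncomputable section

variable {F : Type*} [Field F] [DecidableEq F]

section CommRing

variable {R : Type*} [CommRing R] {n : ℕ}

open AdjoinRoot

theorem coeff_mul_reflect (p q : R[X]) (N : ℕ) :
    (p * reflect N q).coeff N = ∑ i ∈ range (N + 1), p.coeff i * q.coeff i := by
  rw [coeff_mul, Nat.sum_antidiagonal_eq_sum_range_succ_mk]
  refine sum_congr rfl fun i hi => ?_
  have hi : i ≤ N := Nat.lt_succ_iff.mp (mem_range.mp hi)
  rw [coeff_reflect, revAt_le (Nat.sub_le N i), Nat.sub_sub_self hi]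

theorem reflect_sum {ι : Type*} (N : ℕ) (s : Finset ι) (f : ι → R[X]) :
    reflect N (∑ i ∈ s, f i) = ∑ i ∈ s, reflect N (f i) :=
  map_sum (⟨⟨reflect N, reflect_zero⟩, fun p q => reflect_add p q N⟩ : R[X] →+ R[X]) f s

theorem coeff_pred_eq_zero_of_X_pow_sub_one_dvd {P : R[X]} (hdvd : (X ^ n - 1 : R[X]) ∣ P)
    (hdeg : P.natDegree ≤ 2 * n - 2) : P.coeff (n - 1) = 0 := by
  obtain ⟨Q, rfl⟩ := hdvd
  rcases Nat.eq_zero_or_pos n with rfl | hn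
  · simp
  nontriviality R
  by_cases hQ : Q = 0
  · simp [hQ]
  have hmonic : (X ^ n - 1 : R[X]).Monic := monic_X_pow_sub_C 1 hn.ne'
  rw [hmonic.natDegree_mul' hQ, ← C_1, natDegree_X_pow_sub_C] at hdeg
  rw [sub_mul, one_mul, coeff_sub, coeff_X_pow_mul', if_neg (by omega), zero_sub, neg_eq_zero]
  exact coeff_eq_zero_of_natDegree_lt (by omega)

theorem AdjoinRoot.mk_modByMonic {q : R[X]} (hq : q.Monic) (p : R[X]) :
    mk q (p %ₘ q) = mk q p := by
  rw [← modByMonicHom_mk hq, mk_leftInverse hq]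

theorem root_pow_eq_one : root (X ^ n - 1 : R[X]) ^ n = 1 := by
  rw [← sub_eq_zero, ← mk_X, ← map_pow, ← map_one (AdjoinRoot.mk _), ← map_sub, mk_self]

/-- The involution `a(x) ↦ a(x⁻¹)` of `R[x]/(x^n - 1)`. -/
def recip (n : ℕ) : AdjoinRoot (X ^ n - 1 : R[X]) →+* AdjoinRoot (X ^ n - 1 : R[X]) :=
  lift (of _) (root _ ^ (n - 1)) <| by
    rw [eval₂_sub, eval₂_X_pow, eval₂_one, ← pow_mul, mul_comm, pow_mul, root_pow_eq_one,
      one_pow, sub_self]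

theorem recip_mk (p : R[X]) : recip n (mk _ p) = p.eval₂ (of _) (root _ ^ (n - 1)) :=
  lift_mk _ p

theorem mk_reflect (hn : 0 < n) {N : ℕ} {p : R[X]} (hp : p.natDegree ≤ N) :
    mk (X ^ n - 1) (reflect N p) = root _ ^ N * recip n (mk _ p) := by
  have hinv : root (X ^ n - 1 : R[X]) * root _ ^ (n - 1) = 1 := by
    rw [← pow_succ', Nat.sub_add_cancel hn, root_pow_eq_one]
  let _ : Invertible (root (X ^ n - 1 : R[X]) ^ (n - 1)) := ⟨root _, hinv, by rw [mul_comm, hinv]⟩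
  rw [recip_mk, ← eval₂_reflect_mul_pow _ _ N p hp, ← aeval_eq, aeval_def,
    AdjoinRoot.algebraMap_eq, mul_left_comm, ← mul_pow, hinv, one_pow, mul_one]
  rfl

end CommRing

section Field

variable {K : Type*} [Field K] {n : ℕ}

open AdjoinRoot

theorem barPoly_eq_reflect {p : K[X]} (hp : p.natDegree ≤ n) : barPoly n p = reflect n p := by
  conv_rhs => rw [p.as_sum_support_C_mul_X_pow, reflect_sum]
  refine sum_congr rfl fun i hi => ?_
  rw [reflect_C_mul_X_pow, revAt_le ((le_natDegree_of_mem_supp i hi).trans hp)]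

theorem mk_barPoly (hn : 0 < n) {p : K[X]} (hp : p.natDegree ≤ n) :
    mk (X ^ n - 1) (barPoly n p) = recip n (mk _ p) := by
  rw [barPoly_eq_reflect hp, mk_reflect hn hp, root_pow_eq_one, one_mul]

theorem mk_perpPoly_mul_recip (hn : 0 < n) {g : K[X]} (hg : g.Monic) (hdvd : g ∣ X ^ n - 1) :
    mk (X ^ n - 1) (perpPoly n g) * recip n (mk _ g) = 0 := by
  have hquot : ((X ^ n - 1) /ₘ g) * g = X ^ n - 1 := by
    conv_rhs => rw [← modByMonic_add_div (X ^ n - 1) g, (modByMonic_eq_zero_iff_dvd hg).2 hdvd]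
    rw [zero_add, mul_comm]
  rw [perpPoly, reverse, mk_reflect hn le_rfl, mul_assoc, ← map_mul, ← map_mul, hquot, mk_self,
    map_zero, mul_zero]

theorem sInn_eq_eInn_sub (x y : (Fin n → K) × (Fin n → K)) :
    sInn x y = eInn x.1 y.2 - eInn x.2 y.1 := by
  simp only [sInn, eInn, sum_sub_distrib]

theorem eInn_vecOf (hn : 0 < n) (u v : K[X]) :
    eInn (vecOf n u) (vecOf n v) =
      (u %ₘ (X ^ n - 1) * reflect (n - 1) (v %ₘ (X ^ n - 1))).coeff (n - 1) := by
  rw [coeff_mul_reflect, Nat.sub_add_cancel hn, eInn]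
  exact Fin.sum_univ_eq_sum_range
    (fun i => (u %ₘ (X ^ n - 1)).coeff i * (v %ₘ (X ^ n - 1)).coeff i) n

theorem sInn_vecOf_eq_zero (hn : 0 < n) {u₁ u₂ v₁ v₂ : K[X]}
    (h : mk (X ^ n - 1) u₁ * recip n (mk _ v₂) = mk _ u₂ * recip n (mk _ v₁)) :
    sInn (vecOf n u₁, vecOf n u₂) (vecOf n v₁, vecOf n v₂) = 0 := by
  have hM : (X ^ n - 1 : K[X]).Monic := monic_X_pow_sub_C 1 hn.ne'
  have hMdeg : (X ^ n - 1 : K[X]).natDegree = n := by rw [← C_1, natDegree_X_pow_sub_C]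
  have hdeg (w : K[X]) : (w %ₘ (X ^ n - 1)).natDegree ≤ n - 1 :=
    Nat.le_sub_one_of_lt <| (natDegree_modByMonic_lt w hM fun h => by
      rw [h, natDegree_one] at hMdeg; omega).trans_eq hMdeg
  rw [sInn_eq_eInn_sub, eInn_vecOf hn, eInn_vecOf hn, ← coeff_sub]
  apply coeff_pred_eq_zero_of_X_pow_sub_one_dvd
  · rw [← mk_eq_zero, map_sub, map_mul, map_mul, mk_reflect hn (hdeg _), mk_reflect hn (hdeg _),
      mk_modByMonic hM, mk_modByMonic hM, mk_modByMonic hM, mk_modByMonic hM]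
    linear_combination root _ ^ (n - 1) * h
  · have hterm (u v : K[X]) :
        (u %ₘ (X ^ n - 1) * reflect (n - 1) (v %ₘ (X ^ n - 1))).natDegree ≤ 2 * n - 2 := by
      have := natDegree_reflect_le (N := n - 1) (p := v %ₘ (X ^ n - 1))
      have := hdeg u
      have := hdeg v
      exact natDegree_mul_le.trans (by omega)
    exact (natDegree_sub_le _ _).trans (max_le (hterm _ _) (hterm _ _))

end Field

theorem stmt4_general (n : ℕ) (hn : 0 < n) (f g h : F[X])
    (hf : f.Monic) (hg : g.Monic) (hhd : h.degree < n)
    (hfdvd : f ∣ X ^ n - 1) (hgdvd : g ∣ X ^ n - 1) :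
    (QCcode n (perpPoly n g) (perpPoly n f) (barPoly n h) :
        Set ((Fin n → F) × (Fin n → F))) ⊆
      sDualSet (QCcode n f g h : Set ((Fin n → F) × (Fin n → F))) := by
  rintro _ ⟨c, d, rfl⟩ _ ⟨a, b, rfl⟩
  apply sInn_vecOf_eq_zero hn
  have hg_perp := mk_perpPoly_mul_recip hn hg hgdvd
  have hf_perp := mk_perpPoly_mul_recip hn hf hfdvd
  simp only [map_add, map_mul, mk_barPoly hn (natDegree_le_of_degree_le hhd.le)]
  linear_combination (AdjoinRoot.mk _ c * recip n (AdjoinRoot.mk _ b)) * hg_perp -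
    (AdjoinRoot.mk _ d * recip n (AdjoinRoot.mk _ a)) * hf_perp

/-- the QC code generated by `([g^⊥], [hbar g^⊥])` and `(0, [f^⊥])` is
contained in the symplectic dual of `Q_q(f,g,h)`. -/
theorem stmt4 [Fintype F] (n : ℕ) (hn : 0 < n) (f g h : F[X])
    (hf : f.Monic) (hg : g.Monic) (hh : h.Monic)
    (hfd : f.degree < n) (hgd : g.degree < n) (hhd : h.degree < n)
    (hfdvd : f ∣ X ^ n - 1) (hgdvd : g ∣ X ^ n - 1) :
    (QCcode n (perpPoly n g) (perpPoly n f) (barPoly n h) :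
        Set ((Fin n → F) × (Fin n → F))) ⊆
      sDualSet (QCcode n f g h : Set ((Fin n → F) × (Fin n → F))) :=
  stmt4_general n hn f g h hf hg hhd hfdvd hgdvd

end
end

section
/- Assume that gcd(h(x) - beta, x^n - 1) = 1 in F_q[x] for every nonzero beta in F_q. Then every nonzero codeword c of the quasi-cyclic code Q_q(f,g,h) satisfies w_s(c) >= d_q(f,g,h), where d_q(f,g,h) is the minimum (taken in the rational numbers) of the four quantities: d([g(x)]); d([(x^n-1)/gcd(x^n-1, h(x))]); d([lcm(f(x), g(x)/gcd(g(x), h(x)))]); and (d([f(x)]) + d([gcd(h(x)f(x), g(x))]) + (q-1) d([gcd(f(x), g(x))])) / q. -/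
open Polynomial Finset

noncomputable section

variable {F : Type*} [Field F] [DecidableEq F]

/-!
Write a codeword as `(u, w)` with `u = [a f]` and `w = [a h f + b g]`. If `u = 0`, then `w` lies in
the cyclic code of `g`. If `w = β u`, then `x^n - 1` divides `a (h - β) f + b g`, so
`g ∣ (h - β) a f`: for `β ≠ 0` the factor `h - β` is coprime to `x^n - 1` and can be cancelled,
for `β = 0` cancelling `h` costs at most `gcd(g, h)`; hence `u` lies in the cyclic code of
`lcm(f, g / gcd(g, h))`. Otherwise all `w - β u` are nonzero, `w` lies in the code of
`gcd(h f, g)` and every `w - β u` in that of `gcd(f, g)`. Since at a position with `u_i ≠ 0`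
exactly one `β` makes `w_i - β u_i` vanish, `q · w_s(u, w) = wt(u) + Σ_β wt(w - β u)`, which
gives the last bound.
-/

section Polynomial

variable {R : Type*} [CommRing R] {n : ℕ}

lemma X_pow_sub_one_monic [Nontrivial R] (hn : 0 < n) : ((X : R[X]) ^ n - 1).Monic := by
  simpa using monic_X_pow_sub_C (1 : R) hn.ne'

lemma degree_X_pow_sub_one [Nontrivial R] (hn : 0 < n) : ((X : R[X]) ^ n - 1).degree = n := by
  simpa using degree_X_pow_sub_C hn (1 : R)

end Polynomial

section VecOf

variable {K : Type*} [Field K] {n : ℕ}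

lemma vecOf_eq_of_dvd_sub (hn : 0 < n) {p₁ p₂ : K[X]} (h : X ^ n - 1 ∣ p₁ - p₂) :
    vecOf n p₁ = vecOf n p₂ := by
  funext i
  exact congrArg (coeff · i) (modByMonic_eq_of_dvd_sub (X_pow_sub_one_monic hn) h)

lemma dvd_of_vecOf_eq_zero (hn : 0 < n) {p : K[X]} (hp : vecOf n p = 0) : X ^ n - 1 ∣ p := by
  rw [← modByMonic_eq_zero_iff_dvd (X_pow_sub_one_monic hn)]
  ext k
  rcases lt_or_ge k n with hk | hk
  · exact congrFun hp ⟨k, hk⟩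
  · refine coeff_eq_zero_of_degree_lt
      ((degree_modByMonic_lt p (X_pow_sub_one_monic hn)).trans_le ?_)
    rw [degree_X_pow_sub_one hn]
    exact_mod_cast hk

lemma cycDist_le_hWt_vecOf (hn : 0 < n) {u p : K[X]} (huM : u ∣ X ^ n - 1) (hup : u ∣ p)
    (hp : vecOf n p ≠ 0) : cycDist n u ≤ hWt (vecOf n p) := by
  obtain ⟨c, hc⟩ : u ∣ p %ₘ (X ^ n - 1) :=
    (dvd_iff_dvd_of_dvd_sub (huM.trans (dvd_modByMonic_sub p _))).mpr hup
  have hvec : vecOf n (c * u) = vecOf n p := by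
    rw [mul_comm, ← hc]
    exact vecOf_eq_of_dvd_sub hn (dvd_modByMonic_sub p _)
  exact Nat.sInf_le ⟨c, hvec ▸ hp, hvec ▸ rfl⟩

end VecOf

section Weights

variable {K : Type*} [Field K] [DecidableEq K] {n : ℕ}

lemma hWt_eq_card (x : Fin n → K) : hWt x = #{i | x i ≠ 0} := by
  rw [hWt, Nat.card_eq_fintype_card, Fintype.card_subtype]

lemma sWt_eq_card (v : (Fin n → K) × (Fin n → K)) : sWt v = #{i | (v.1 i, v.2 i) ≠ (0, 0)} := by
  rw [sWt, Nat.card_eq_fintype_card, Fintype.card_subtype]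

lemma hWt_fst_le_sWt (v : (Fin n → K) × (Fin n → K)) : hWt v.1 ≤ sWt v := by
  rw [hWt_eq_card, sWt_eq_card]
  exact card_le_card fun i => by simp +contextual

lemma hWt_snd_le_sWt (v : (Fin n → K) × (Fin n → K)) : hWt v.2 ≤ sWt v := by
  rw [hWt_eq_card, sWt_eq_card]
  exact card_le_card fun i => by simp +contextual

end Weights

section Counting

variable {K : Type*} [Field K] [Fintype K] [DecidableEq K]

lemma card_filter_sub_mul_ne_zero_add (x y : K) :
    #{β : K | y - β * x ≠ 0} + (if x ≠ 0 then 1 else 0)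
      = Fintype.card K * (if (x, y) ≠ (0, 0) then 1 else 0) := by
  by_cases hx : x = 0
  · by_cases hy : y = 0 <;> simp [hx, hy]
  · have hroot : (univ.filter fun β : K => y - β * x ≠ 0) = univ.erase (y / x) := by
      ext β
      simp [sub_eq_zero, eq_div_iff hx, eq_comm]
    have hq : 1 ≤ Fintype.card K := Fintype.card_pos
    have hxy : (x, y) ≠ (0, 0) := by simp [hx]
    rw [hroot, card_erase_of_mem (mem_univ _), card_univ, if_pos hx, if_pos hxy]
    omega

lemma card_mul_sWt {n : ℕ} (u w : Fin n → K) :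
    Fintype.card K * sWt (u, w) = hWt u + ∑ β : K, hWt (w - β • u) := by
  simp only [sWt_eq_card, hWt_eq_card, card_filter, Pi.sub_apply, Pi.smul_apply, smul_eq_mul]
  rw [sum_comm, mul_sum, ← sum_add_distrib]
  refine sum_congr rfl fun i _ => ?_
  rw [← card_filter, ← card_filter_sub_mul_ne_zero_add, add_comm]

end Counting

lemma div_gcd_dvd_of_dvd_mul {R : Type*} [EuclideanDomain R] [GCDMonoid R] {g h r : R}
    (hg : g ≠ 0) (hghr : g ∣ h * r) : g / GCDMonoid.gcd g h ∣ r := by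
  have hgcd : GCDMonoid.gcd g h ≠ 0 := fun h0 => hg ((gcd_eq_zero_iff g h).mp h0).1
  refine (mul_dvd_mul_iff_left hgcd).mp ?_
  rw [EuclideanDomain.mul_div_cancel' hgcd (gcd_dvd_left g h)]
  exact dvd_gcd_mul_of_dvd_mul hghr

lemma div_gcd_dvd_of_dvd_sub_C_mul {K : Type*} [Field K] [DecidableEq K] {g h M r : K[X]}
    (hg : g ≠ 0) (hgM : g ∣ M) (hcop : ∀ β : K, β ≠ 0 → GCDMonoid.gcd (h - C β) M = 1) (β : K)
    (hghr : g ∣ (h - C β) * r) : g / GCDMonoid.gcd g h ∣ r := by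
  rcases eq_or_ne β 0 with rfl | hβ
  · simpa using div_gcd_dvd_of_dvd_mul hg hghr
  · have hcopM : IsCoprime (h - C β) M := (gcd_isUnit_iff _ _).mp (by simp [hcop β hβ])
    exact (EuclideanDomain.div_dvd_of_dvd (gcd_dvd_left g h)).trans
      ((hcopM.of_isCoprime_of_dvd_right hgM).symm.dvd_of_dvd_mul_left hghr)

section Codewords

variable {K : Type*} [Field K] {n : ℕ} {f g h : K[X]}

lemma cycDist_le_hWt_snd_of_fst_eq_zero (hn : 0 < n) (hgM : g ∣ X ^ n - 1) (a b : K[X])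
    (hu : vecOf n (a * f) = 0) (hw : vecOf n (a * h * f + b * g) ≠ 0) :
    cycDist n g ≤ hWt (vecOf n (a * h * f + b * g)) := by
  have hMaf := dvd_of_vecOf_eq_zero hn hu
  refine cycDist_le_hWt_vecOf hn hgM (dvd_add ?_ (dvd_mul_left g b)) hw
  rw [mul_right_comm]
  exact hgM.trans (hMaf.mul_right h)

lemma cycDist_lcm_le_hWt_fst_of_snd_eq_smul [DecidableEq K] (hn : 0 < n) (hfM : f ∣ X ^ n - 1)
    (hgM : g ∣ X ^ n - 1) (hcop : ∀ β : K, β ≠ 0 → GCDMonoid.gcd (h - C β) (X ^ n - 1) = 1)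
    (a b : K[X]) (β : K) (hw : vecOf n (a * h * f + b * g) = β • vecOf n (a * f))
    (hu : vecOf n (a * f) ≠ 0) :
    cycDist n (GCDMonoid.lcm f (g / GCDMonoid.gcd g h)) ≤ hWt (vecOf n (a * f)) := by
  have hg : g ≠ 0 := ne_zero_of_dvd_ne_zero (X_pow_sub_one_monic hn).ne_zero hgM
  have hM : X ^ n - 1 ∣ a * h * f + b * g - β • (a * f) :=
    dvd_of_vecOf_eq_zero hn (by rw [map_sub, map_smul, hw, sub_self])
  have hghaf : g ∣ (h - C β) * (a * f) := by
    have hsplit : (h - C β) * (a * f) = (a * h * f + b * g - β • (a * f)) - b * g := by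
      rw [smul_eq_C_mul]; ring
    rw [hsplit]
    exact dvd_sub (hgM.trans hM) (dvd_mul_left g b)
  have hg'M : g / GCDMonoid.gcd g h ∣ X ^ n - 1 :=
    (EuclideanDomain.div_dvd_of_dvd (gcd_dvd_left g h)).trans hgM
  exact cycDist_le_hWt_vecOf hn (lcm_dvd hfM hg'M)
    (lcm_dvd (dvd_mul_left f a) (div_gcd_dvd_of_dvd_sub_C_mul hg hgM hcop β hghaf)) hu

lemma cycDist_add_le_card_mul_sWt [Fintype K] [DecidableEq K] (hn : 0 < n)
    (hfM : f ∣ X ^ n - 1) (hgM : g ∣ X ^ n - 1) (a b : K[X]) (hu : vecOf n (a * f) ≠ 0)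
    (hw : ∀ β : K, vecOf n (a * h * f + b * g) ≠ β • vecOf n (a * f)) :
    cycDist n f + cycDist n (GCDMonoid.gcd (h * f) g)
        + (Fintype.card K - 1) * cycDist n (GCDMonoid.gcd f g)
      ≤ Fintype.card K * sWt (vecOf n (a * f), vecOf n (a * h * f + b * g)) := by
  set u := vecOf n (a * f)
  set w := vecOf n (a * h * f + b * g)
  have hw0 : w ≠ 0 := by simpa using hw 0
  have hfu : cycDist n f ≤ hWt u := cycDist_le_hWt_vecOf hn hfM (dvd_mul_left f a) hu
  have hhfg : cycDist n (GCDMonoid.gcd (h * f) g) ≤ hWt (w - (0 : K) • u) := by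
    rw [zero_smul, sub_zero]
    refine cycDist_le_hWt_vecOf hn ((gcd_dvd_right _ _).trans hgM) (dvd_add ?_ ?_) hw0
    · exact (gcd_dvd_left _ _).trans ⟨a, by ring⟩
    · exact dvd_mul_of_dvd_right (gcd_dvd_right _ _) b
  have hfg (β : K) : cycDist n (GCDMonoid.gcd f g) ≤ hWt (w - β • u) := by
    have hshift : vecOf n (a * h * f + b * g - C β * (a * f)) = w - β • u := by
      rw [← smul_eq_C_mul, map_sub, map_smul]
    rw [← hshift]
    refine cycDist_le_hWt_vecOf hn ((gcd_dvd_left f g).trans hfM) (dvd_sub (dvd_add ?_ ?_) ?_)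
      (hshift ▸ sub_ne_zero.mpr (hw β))
    · exact dvd_mul_of_dvd_right (gcd_dvd_left f g) _
    · exact dvd_mul_of_dvd_right (gcd_dvd_right f g) b
    · exact dvd_mul_of_dvd_right (dvd_mul_of_dvd_right (gcd_dvd_left f g) a) _
  have hrest : (Fintype.card K - 1) * cycDist n (GCDMonoid.gcd f g)
      ≤ ∑ β ∈ univ.erase (0 : K), hWt (w - β • u) := by
    simpa [card_erase_of_mem] using card_nsmul_le_sum (univ.erase 0) _ _ fun β _ => hfg β
  rw [card_mul_sWt, ← add_sum_erase univ _ (mem_univ (0 : K)), add_assoc]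
  exact add_le_add hfu (add_le_add hhfg hrest)

end Codewords

theorem stmt5_general [Fintype F] (n : ℕ) (hn : 0 < n) (f g h : F[X])
    (hfdvd : f ∣ X ^ n - 1) (hgdvd : g ∣ X ^ n - 1)
    (hcop : ∀ β : F, β ≠ 0 → GCDMonoid.gcd (h - C β) (X ^ n - 1) = 1) :
    ∀ v ∈ QCcode n f g h, v ≠ 0 →
      (sWt v : ℚ) ≥ dSymp (Fintype.card F) n f g h := by
  rintro _ ⟨a, b, rfl⟩ hv
  set u := vecOf n (a * f)
  set w := vecOf n (a * h * f + b * g)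
  simp only [dSymp, ge_iff_le, min_le_iff]
  by_cases hu : u = 0
  · have hw : w ≠ 0 := fun hw => hv (Prod.ext hu hw)
    refine Or.inl (Or.inl (Or.inl ?_))
    exact_mod_cast (cycDist_le_hWt_snd_of_fst_eq_zero hn hgdvd a b hu hw).trans
      (hWt_snd_le_sWt (u, w))
  by_cases hprop : ∃ β : F, w = β • u
  · obtain ⟨β, hβ⟩ := hprop
    refine Or.inl (Or.inr ?_)
    exact_mod_cast (cycDist_lcm_le_hWt_fst_of_snd_eq_smul hn hfdvd hgdvd hcop a b β hβ hu).trans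
      (hWt_fst_le_sWt (u, w))
  · refine Or.inr ?_
    have hq : 1 ≤ Fintype.card F := Fintype.card_pos
    have hbound := Nat.cast_le (α := ℚ) |>.mpr
      (cycDist_add_le_card_mul_sWt hn hfdvd hgdvd a b hu (not_exists.mp hprop))
    rw [div_le_iff₀ (by exact_mod_cast hq)]
    push_cast [Nat.cast_sub hq] at hbound
    linarith

/-- lower bound `d_q(f,g,h)` on the symplectic weight of nonzero codewords. -/
theorem stmt5 [Fintype F] (n : ℕ) (hn : 0 < n) (f g h : F[X])
    (hf : f.Monic) (hg : g.Monic) (hh : h.Monic)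
    (hfd : f.degree < n) (hgd : g.degree < n) (hhd : h.degree < n)
    (hfdvd : f ∣ X ^ n - 1) (hgdvd : g ∣ X ^ n - 1)
    (hcop : ∀ β : F, β ≠ 0 → GCDMonoid.gcd (h - C β) (X ^ n - 1) = 1) :
    ∀ v ∈ QCcode n f g h, v ≠ 0 →
      (sWt v : ℚ) ≥ dSymp (Fintype.card F) n f g h :=
  stmt5_general n hn f g h hfdvd hgdvd hcop

end
end

section
/- Let q = p^r and assume the polynomial x^n - 1 in F_q[x] splits in the finite field F_{p^{mr}} with p^{mr} elements. Let s be a positive integer with s < p such that s divides m and gcd(s, r) = 1. Define the polynomial h(x) = (p - s) * tr_{mr/s}(x) + tr_{mr/1}(x) in F_q[x], where tr_{ji/i}(x) := x + x^{p^i} + x^{p^{2i}} + ... + x^{p^{(j-1)i}}. Then for every nonzero beta in F_q, gcd(h(x) + beta, x^n - 1) = 1 in F_q[x]. -/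
open Polynomial Finset

noncomputable section

variable {F : Type*} [Field F] [DecidableEq F]

/-!
Let `α` be a common root of `h + β` and `x^n - 1` in `E = 𝔽_{p^{mr}}`, and put
`T = tr_{mr/s}(α)`, `S = tr_{mr/1}(α) = tr_{s/1}(T)`. Since `p = 0` in `E`, `h(α) + β = 0` reads
`s T = S + β`. Now `T` is fixed by `x ↦ x^{p^s}` and `S` by `x ↦ x^p`, while `β ∈ 𝔽_{p^r}`; hence
`s T` is fixed by both `x ↦ x^{p^s}` and `x ↦ x^{p^r}`, so by `x ↦ x^p` because `gcd(s, r) = 1`.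
As `0 < s < p`, `T ∈ 𝔽_p`, so `S = tr_{s/1}(T) = s T` and `β = 0`.
-/

theorem Finset.sum_range_succ_eq_sum_range_of_eq {M : Type*} [AddCommMonoid M] (f : ℕ → M)
    {n : ℕ} (hf : f n = f 0) : ∑ k ∈ range n, f (k + 1) = ∑ k ∈ range n, f k := by
  cases n with
  | zero => simp
  | succ n => rw [sum_range_succ (fun k => f (k + 1)), hf, ← sum_range_succ']

theorem pow_pow_eq_self_of_pow_eq_self {M : Type*} [Monoid M] {p : ℕ} {x : M} (hx : x ^ p = x)
    (k : ℕ) : x ^ p ^ k = x := by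
  have := (show Function.IsFixedPt (· ^ p) x from hx).iterate k
  rwa [pow_iterate] at this

theorem pow_eq_self_of_pow_pow_eq_self_of_coprime {M : Type*} [Monoid M] {p s r : ℕ}
    (hsr : s.Coprime r) {x : M} (hs : x ^ p ^ s = x) (hr : x ^ p ^ r = x) : x ^ p = x := by
  have periodic_iff (k : ℕ) : Function.IsPeriodicPt (· ^ p) k x ↔ x ^ p ^ k = x := by
    rw [Function.IsPeriodicPt, Function.IsFixedPt, pow_iterate]
  simpa [hsr.gcd_eq_one] using
    (periodic_iff _).mp (((periodic_iff s).mpr hs).gcd ((periodic_iff r).mpr hr))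

-- `frobTrace p i j x` is the paper's `tr_{ji/i}(x)`.
def frobTrace {R : Type*} [CommSemiring R] (p i j : ℕ) (x : R) : R :=
  ∑ k ∈ range j, x ^ p ^ (k * i)

theorem frobTrace_one_of_pow_eq_self {R : Type*} [CommSemiring R] {p : ℕ} (i : ℕ) {y : R}
    (hy : y ^ p = y) : frobTrace p 1 i y = i * y := by
  simp [frobTrace, pow_pow_eq_self_of_pow_eq_self hy]

section frobTrace

variable {R : Type*} [CommSemiring R] {p : ℕ} [ExpChar R p]

theorem frobTrace_pow_pow (i j l : ℕ) (x : R) :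
    frobTrace p i j x ^ p ^ l = frobTrace p i j (x ^ p ^ l) := by
  simp only [frobTrace, ← iterateFrobenius_def, map_sum]
  refine sum_congr rfl fun k _ => ?_
  simp only [iterateFrobenius_def, ← pow_mul, mul_comm]

theorem frobTrace_pow_pow_eq_self {i j : ℕ} {x : R} (hx : x ^ p ^ (j * i) = x) :
    frobTrace p i j x ^ p ^ i = frobTrace p i j x := by
  have shift (k : ℕ) : (x ^ p ^ i) ^ p ^ (k * i) = x ^ p ^ ((k + 1) * i) := by
    rw [← pow_mul, ← pow_add, Nat.succ_mul, add_comm]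
  rw [frobTrace_pow_pow, frobTrace, frobTrace]
  simp_rw [shift]
  exact sum_range_succ_eq_sum_range_of_eq (fun k => x ^ p ^ (k * i)) (by simpa using hx)

theorem frobTrace_one_mul (i j : ℕ) (x : R) :
    frobTrace p 1 (j * i) x = frobTrace p 1 i (frobTrace p i j x) := by
  have double_sum :
      frobTrace p 1 (j * i) x = ∑ k ∈ range j, ∑ l ∈ range i, x ^ p ^ (k * i + l) := by
    induction j with
    | zero => simp [frobTrace]
    | succ j ih =>
      rw [Nat.succ_mul, frobTrace, sum_range_add, ← frobTrace, ih, sum_range_succ]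
      simp only [mul_one]
  rw [double_sum, sum_comm, frobTrace]
  refine sum_congr rfl fun l _ => ?_
  rw [mul_one, frobTrace_pow_pow, frobTrace]
  simp_rw [← pow_mul, ← pow_add, add_comm]

end frobTrace

theorem eq_zero_of_natCast_mul_frobTrace_eq {K : Type*} [Field K] {p : ℕ} [ExpChar K p]
    {r s c : ℕ} (hsr : s.Coprime r) (hs : (s : K) ≠ 0) {x b : K}
    (hx : x ^ p ^ (c * s) = x) (hb : b ^ p ^ r = b)
    (heq : s * frobTrace p s c x = frobTrace p 1 (c * s) x + b) : b = 0 := by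
  set T := frobTrace p s c x
  have hT : T ^ p ^ s = T := frobTrace_pow_pow_eq_self hx
  have hS : frobTrace p 1 (c * s) x ^ p = frobTrace p 1 (c * s) x := by
    simpa using frobTrace_pow_pow_eq_self (i := 1) (by simpa using hx)
  have natCast_pow_pow (k : ℕ) : (s : K) ^ p ^ k = s := map_natCast (iterateFrobenius K p k) s
  have hsT_s : ((s : K) * T) ^ p ^ s = s * T := by rw [mul_pow, natCast_pow_pow, hT]
  have hsT_r : ((s : K) * T) ^ p ^ r = s * T := by
    rw [heq, add_pow_expChar_pow, pow_pow_eq_self_of_pow_eq_self hS, hb]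
  have hTp : T ^ p = T := by
    have hsT := pow_eq_self_of_pow_pow_eq_self_of_coprime hsr hsT_s hsT_r
    rw [mul_pow, ← pow_one p, natCast_pow_pow, pow_one] at hsT
    exact mul_left_cancel₀ hs hsT
  rw [frobTrace_one_mul, frobTrace_one_of_pow_eq_self s hTp] at heq
  simpa using heq.symm

theorem exists_aeval_eq_zero_of_gcd_ne_one {K L : Type*} [Field K] [DecidableEq K] [Field L]
    [Algebra K L] {f g : K[X]} (hg : g ≠ 0) (hsplit : (g.map (algebraMap K L)).Splits)
    (hfg : gcd f g ≠ 1) : ∃ α : L, aeval α f = 0 := by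
  have hdeg : (gcd f g).degree ≠ 0 := fun h0 =>
    hfg (by rw [← _root_.normalize_gcd, normalize_eq_one.mpr (isUnit_iff_degree_eq_zero.mpr h0)])
  have hsplit_gcd := hsplit.of_dvd (map_ne_zero hg) (map_dvd _ (gcd_dvd_right f g))
  obtain ⟨α, hα⟩ := hsplit_gcd.exists_eval_eq_zero (by rwa [degree_map])
  obtain ⟨k, hk⟩ := gcd_dvd_left f g
  refine ⟨α, ?_⟩
  rw [hk, map_mul, aeval_def, eval₂_eq_eval_map, hα, zero_mul]

theorem stmt8_general [Fintype F] {E : Type*} [Field E] [Fintype E] [Algebra F E]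
    (p r m n : ℕ) (hp : p.Prime) (hn : 0 < n)
    (hF : Fintype.card F = p ^ r) (hE : Fintype.card E = p ^ (m * r))
    (hsplit : Polynomial.Splits ((X ^ n - 1 : F[X]).map (algebraMap F E)))
    (s : ℕ) (hs : 0 < s) (hsp : s < p) (hsm : s ∣ m) (hsr : Nat.Coprime s r)
    (h : F[X])
    (hpoly : h = C ((p - s : ℕ) : F) * (∑ k ∈ Finset.range (m * r / s), X ^ (p ^ (k * s)))
        + ∑ k ∈ Finset.range (m * r), X ^ (p ^ k)) :
    ∀ β : F, β ≠ 0 → GCDMonoid.gcd (h + C β) (X ^ n - 1) = 1 := by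
  intro β hβ
  by_contra hgcd
  have : Fact p.Prime := ⟨hp⟩
  have : CharP E p := charP_of_card_eq_prime_pow hE
  obtain ⟨α, hα⟩ := exists_aeval_eq_zero_of_gcd_ne_one (X_pow_sub_C_ne_zero hn 1) hsplit hgcd
  have hcs : m * r / s * s = m * r := Nat.div_mul_cancel (hsm.mul_right r)
  have hsE : (s : E) ≠ 0 := by
    rw [Ne, CharP.cast_eq_zero_iff E p]
    exact Nat.not_dvd_of_pos_of_lt hs hsp
  have hαβ : (s : E) * frobTrace p s (m * r / s) α
      = frobTrace p 1 (m * r / s * s) α + algebraMap F E β := by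
    have hcoeff : algebraMap F E ((p - s : ℕ) : F) = -s := by
      rw [map_natCast, Nat.cast_sub hsp.le, CharP.cast_eq_zero, zero_sub]
    simp only [hpoly, map_add, map_mul, aeval_C, hcoeff, map_sum, map_pow, aeval_X] at hα
    rw [hcs]
    simp only [frobTrace, mul_one]
    linear_combination -hα
  refine hβ <| (map_eq_zero (algebraMap F E)).mp <|
    eq_zero_of_natCast_mul_frobTrace_eq hsr hsE ?_ ?_ hαβ
  · rw [hcs, ← hE, FiniteField.pow_card]
  · rw [← map_pow, ← hF, FiniteField.pow_card]

/-- the trace polynomial `h(x) = (p-s) tr_{mr/s}(x) + tr_{mr/1}(x)` satisfies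
`gcd(h(x) + β, x^n - 1) = 1` for all nonzero `β`. -/
theorem stmt8 [Fintype F] {E : Type*} [Field E] [Fintype E] [Algebra F E]
    (p r m n : ℕ) (hp : p.Prime) (hr : 0 < r) (hm : 0 < m) (hn : 0 < n)
    (hF : Fintype.card F = p ^ r) (hE : Fintype.card E = p ^ (m * r))
    (hsplit : Polynomial.Splits ((X ^ n - 1 : F[X]).map (algebraMap F E)))
    (s : ℕ) (hs : 0 < s) (hsp : s < p) (hsm : s ∣ m) (hsr : Nat.Coprime s r)
    (h : F[X])
    (hpoly : h = C ((p - s : ℕ) : F) * (∑ k ∈ Finset.range (m * r / s), X ^ (p ^ (k * s)))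
        + ∑ k ∈ Finset.range (m * r), X ^ (p ^ k)) :
    ∀ β : F, β ≠ 0 → GCDMonoid.gcd (h + C β) (X ^ n - 1) = 1 :=
  stmt8_general p r m n hp hn hF hE hsplit s hs hsp hsm hsr h hpoly

end
end

section
/- Let p be a prime and m a positive integer not divisible by p, and set n = p^m - 1. Then for every nonzero beta in F_p, the polynomials x^p - x + beta and x^n - 1 are coprime in F_p[x]; equivalently, gcd(x^p - x - beta, x^n - 1) = 1 for all nonzero beta in F_p. -/
/-!
Let `α` be a common root in an algebraic closure. Since `α ^ p = α + β` and Frobenius fixes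
`β ∈ 𝔽_p`, iterating gives `α ^ p ^ m = α + m β`, which differs from `α` because `p ∤ m`
and `β ≠ 0`. But `α ^ (p ^ m - 1) = 1` forces `α ^ p ^ m = α`.
-/

open Polynomial Finset

noncomputable section

variable {F : Type*} [Field F] [DecidableEq F]

section ArtinSchreier

variable (p : ℕ) [Fact p.Prime]

theorem pow_prime_pow_eq_add_nsmul {R : Type*} [CommRing R] [CharP R p] {α b : R}
    (hα : α ^ p = α + b) (hb : b ^ p = b) (k : ℕ) : α ^ p ^ k = α + k • b := by
  induction k with
  | zero => simp
  | succ k ih =>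
    have hkb : (k • b) ^ p = k • b := by
      rw [← frobenius_def, map_nsmul, frobenius_def, hb]
    rw [pow_succ, pow_mul, ih, add_pow_char, hα, hkb, succ_nsmul]
    abel

theorem pow_prime_pow_ne_self {R : Type*} [CommRing R] [NoZeroDivisors R] [CharP R p] {α b : R}
    (hα : α ^ p = α + b) (hb : b ^ p = b) (hb0 : b ≠ 0) {m : ℕ} (hm : ¬ p ∣ m) :
    α ^ p ^ m ≠ α := by
  rw [pow_prime_pow_eq_add_nsmul p hα hb, Ne, add_eq_left, nsmul_eq_mul, mul_eq_zero,
    CharP.cast_eq_zero_iff R p]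
  tauto

theorem isCoprime_X_pow_sub_X_sub_C_X_pow_sub_one {K : Type*} [Field K] [CharP K p] {β : K}
    (hβ : β ^ p = β) (hβ0 : β ≠ 0) {m : ℕ} (hm : ¬ p ∣ m) :
    IsCoprime (X ^ p - X - C β) (X ^ (p ^ m - 1) - 1 : K[X]) := by
  rw [isCoprime_iff_aeval_ne_zero_of_isAlgClosed K (AlgebraicClosure K)]
  intro α
  by_contra! ⟨hroot, hunit⟩
  set b := algebraMap K (AlgebraicClosure K) β
  have hα : α ^ p = α + b := by
    simpa [sub_sub, sub_eq_zero] using hroot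
  have hb : b ^ p = b := by rw [← map_pow, hβ]
  have hb0 : b ≠ 0 := (_root_.map_ne_zero _).mpr hβ0
  have hfix : α ^ p ^ m = α := by
    simp only [map_sub, map_pow, aeval_X, map_one, sub_eq_zero] at hunit
    rw [← Nat.sub_add_cancel (Nat.one_le_pow m p (Fact.out : p.Prime).pos), pow_succ, hunit,
      one_mul]
  exact pow_prime_pow_ne_self p hα hb hb0 hm hfix

end ArtinSchreier

theorem stmt11_general (p m : ℕ) [Fact p.Prime] (hpm : ¬ p ∣ m) :
    ∀ β : ZMod p, β ≠ 0 →
      GCDMonoid.gcd ((X : (ZMod p)[X]) ^ p - X - C β) (X ^ (p ^ m - 1) - 1) = 1 := by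
  intro β hβ
  have hco := isCoprime_X_pow_sub_X_sub_C_X_pow_sub_one p (ZMod.pow_card β) hβ hpm
  rw [← _root_.normalize_gcd, normalize_eq_one]
  exact (gcd_isUnit_iff _ _).mpr hco

/-- for `p` prime, `p ∤ m` and `n = p^m - 1`, `x^p - x - β` is coprime with
`x^n - 1` for all nonzero `β` in `F_p`. -/
theorem stmt11 (p m : ℕ) [Fact p.Prime] (hm : 0 < m) (hpm : ¬ p ∣ m) :
    ∀ β : ZMod p, β ≠ 0 →
      GCDMonoid.gcd ((X : (ZMod p)[X]) ^ p - X - C β) (X ^ (p ^ m - 1) - 1) = 1 :=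
  stmt11_general p m hpm

end
end
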